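/- For every permutation p of {1,…,N} and every measurable set A ⊆ ℱ, almost surely E[1{h(Y,X₁,…,X_N) ∈ A} · 1{R = p} | σ(Y)] = (1/N!) · E[1{h(Y,X₁,…,X_N) ∈ A} | σ(Y)]. -/

import Mathlib

open MeasureTheory ProbabilityTheory
open scoped ENNReal NNReal

/-- The rank vector of a tuple of reals: `rankVec r k = #{j : r j ≤ r k}`.
When the entries are pairwise distinct this is a permutation of `{1, …, N}`. -/
noncomputable def rankVec {N : ℕ} (r : Fin N → ℝ) : Fin N → ℕ :=
  fun k => (Finset.univ.filter fun j => r j ≤ r k).card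

lemma rankVec_comp_perm {N : ℕ} (r : Fin N → ℝ) (σ : Equiv.Perm (Fin N)) (k : Fin N) :
    rankVec (fun j => r (σ j)) k = rankVec r (σ k) := by
  unfold rankVec
  exact Finset.card_equiv σ (by simp)

lemma measurable_rankVec {N : ℕ} : Measurable (rankVec (N := N)) := by
  apply measurable_pi_lambda
  intro k
  unfold rankVec
  simp_rw [Finset.card_filter]
  apply Finset.measurable_sum
  intro j _
  exact Measurable.ite (measurableSet_le (measurable_pi_apply j) (measurable_pi_apply k))
    measurable_const measurable_const

lemma rankVec_pos {N : ℕ} (r : Fin N → ℝ) (k : Fin N) : 1 ≤ rankVec r k :=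
  Finset.card_pos.2 ⟨k, by simp [rankVec]⟩

lemma rankVec_le {N : ℕ} (r : Fin N → ℝ) (k : Fin N) : rankVec r k ≤ N := by
  simpa [rankVec] using (Finset.card_filter_le Finset.univ fun j => r j ≤ r k)

lemma rankVec_inj {N : ℕ} {r : Fin N → ℝ} (hr : Function.Injective r) {k k' : Fin N}
    (hkk : rankVec r k = rankVec r k') : k = k' := by
  rcases lt_trichotomy (r k) (r k') with hlt | heq | hlt
  · exfalso
    have hss : (Finset.univ.filter fun j => r j ≤ r k) ⊂ (Finset.univ.filter fun j => r j ≤ r k') := by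
      constructor
      · intro j hj
        simp only [Finset.mem_filter, Finset.mem_univ, true_and] at hj ⊢
        exact hj.trans hlt.le
      · intro hsub
        have := hsub (by simp : k' ∈ Finset.univ.filter fun j => r j ≤ r k')
        simp only [Finset.mem_filter, Finset.mem_univ, true_and] at this
        exact absurd (lt_of_lt_of_le hlt this) (lt_irrefl _)
    exact absurd hkk (by simpa [rankVec] using (Finset.card_lt_card hss).ne)
  · exact hr heq
  · exfalso
    have hss : (Finset.univ.filter fun j => r j ≤ r k') ⊂ (Finset.univ.filter fun j => r j ≤ r k) := by
      constructor
      · intro j hj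
        simp only [Finset.mem_filter, Finset.mem_univ, true_and] at hj ⊢
        exact hj.trans hlt.le
      · intro hsub
        have := hsub (by simp : k ∈ Finset.univ.filter fun j => r j ≤ r k)
        simp only [Finset.mem_filter, Finset.mem_univ, true_and] at this
        exact absurd (lt_of_lt_of_le hlt this) (lt_irrefl _)
    exact absurd hkk.symm (by simpa [rankVec] using (Finset.card_lt_card hss).ne)

lemma rank_existsUnique {N : ℕ} {r : Fin N → ℝ} (hr : Function.Injective r) :
    ∃! q : Equiv.Perm (Fin N), ∀ k, rankVec r k = (q k : ℕ) + 1 := by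
  have hb : ∀ k : Fin N, rankVec r k - 1 < N := fun k => by
    have h1 := rankVec_pos r k
    have h2 := rankVec_le r k
    have h3 := k.pos
    omega
  set f : Fin N → Fin N := fun k => ⟨rankVec r k - 1, hb k⟩ with hf
  have hfinj : Function.Injective f := by
    intro k k' hkk
    apply rankVec_inj hr
    have h1 := rankVec_pos r k
    have h2 := rankVec_pos r k'
    have := congrArg Fin.val hkk
    simp only [hf] at this
    omega
  refine ⟨Equiv.ofBijective f (Finite.injective_iff_bijective.mp hfinj), fun k => ?_, ?_⟩
  · have h1 := rankVec_pos r k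
    simp only [Equiv.ofBijective_apply, hf]
    omega
  · intro q' hq'
    ext k
    have h1 := hq' k
    have h2 := rankVec_pos r k
    have : (q' k : ℕ) = (Equiv.ofBijective f (Finite.injective_iff_bijective.mp hfinj) k : ℕ) := by
      simp only [Equiv.ofBijective_apply, hf]
      omega
    exact this

lemma pi_map_perm {𝓧 : Type*} [MeasurableSpace 𝓧] {N : ℕ} (μ : Measure 𝓧)
    [IsProbabilityMeasure μ] (σ : Equiv.Perm (Fin N)) :
    Measure.map (fun x : Fin N → 𝓧 => fun k => x (σ k)) (Measure.pi fun _ => μ)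
      = Measure.pi fun _ => μ := by
  have hmeas : Measurable fun x : Fin N → 𝓧 => fun k => x (σ k) :=
    measurable_pi_lambda _ fun k => measurable_pi_apply _
  refine (Measure.pi_eq fun s hs => ?_).symm
  rw [Measure.map_apply hmeas (MeasurableSet.univ_pi hs)]
  have hpre : (fun x : Fin N → 𝓧 => fun k => x (σ k)) ⁻¹' Set.univ.pi s
      = Set.univ.pi fun j => s (σ.symm j) := by
    ext x
    simp only [Set.mem_preimage, Set.mem_univ_pi]
    constructor
    · intro hx j
      have := hx (σ.symm j)
      simpa using this
    · intro hx k
      simpa using hx (σ k)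
  rw [hpre, Measure.pi_pi]
  exact Fintype.prod_equiv σ.symm _ _ fun j => rfl

/-- For every permutation `p` of `{1,…,N}` and every measurable `A ⊆ 𝓕`, almost surely
`E[1{h(Y,X₁,…,X_N) ∈ A} · 1{R = p} | σ(Y)] = (1/N!) · E[1{h(Y,X₁,…,X_N) ∈ A} | σ(Y)]`. -/
theorem condexp_indicator_rank_factorial
    {Ω : Type*} [MeasurableSpace Ω] (P : Measure Ω) [IsProbabilityMeasure P]
    {𝓧 ℰ 𝓕 : Type*} [MeasurableSpace 𝓧] [MeasurableSpace ℰ] [MeasurableSpace 𝓕]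
    (N : ℕ) (X : Fin N → Ω → 𝓧) (Y : Ω → ℰ)
    (hY : Measurable Y) (hX : ∀ k, Measurable (X k))
    -- σ(Y), σ(X₁), …, σ(X_N) form an independent family
    (hIndep : iIndep (fun i : Option (Fin N) =>
      i.elim (MeasurableSpace.comap Y inferInstance)
        fun k => MeasurableSpace.comap (X k) inferInstance) P)
    -- X₁, …, X_N are identically distributed
    (hId : ∀ j k : Fin N, IdentDistrib (X j) (X k) P P)
    (g : ℰ → 𝓧 → ℝ) (hg : Measurable (Function.uncurry g))
    -- almost surely the values g(Y,X₁),…,g(Y,X_N) are pairwise distinct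
    (hdist : ∀ᵐ ω ∂P, Function.Injective fun k => g (Y ω) (X k ω))
    -- h is measurable and symmetric in its last N arguments
    (h : ℰ → (Fin N → 𝓧) → 𝓕) (hh : Measurable (Function.uncurry h))
    (hsymm : ∀ (y : ℰ) (x : Fin N → 𝓧) (p : Equiv.Perm (Fin N)),
      h y (fun k => x (p k)) = h y x) :
    ∀ (p : Equiv.Perm (Fin N)) (A : Set 𝓕), MeasurableSet A →
      P[fun ω =>
          ({ω | h (Y ω) (fun k => X k ω) ∈ A}.indicator (fun _ => (1 : ℝ)) ω) *
          ({ω | ∀ k, rankVec (fun j => g (Y ω) (X j ω)) k = (p k : ℕ) + 1}.indicator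
            (fun _ => (1 : ℝ)) ω)
        | MeasurableSpace.comap Y inferInstance]
      =ᵐ[P]
      fun ω => (N.factorial : ℝ)⁻¹ *
        (P[{ω | h (Y ω) (fun k => X k ω) ∈ A}.indicator (fun _ => (1 : ℝ))
          | MeasurableSpace.comap Y inferInstance]) ω := by
  intro p A hA
  classical
  rcases Nat.eq_zero_or_pos N with hN | hN
  · -- degenerate case N = 0
    subst hN
    have hT0 : {ω : Ω | ∀ k : Fin 0, rankVec (fun j => g (Y ω) (X j ω)) k = (p k : ℕ) + 1}
        = Set.univ := Set.eq_univ_of_forall fun ω k => k.elim0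
    have he : (fun ω =>
        ({ω | h (Y ω) (fun k => X k ω) ∈ A}.indicator (fun _ => (1 : ℝ)) ω) *
        ({ω : Ω | ∀ k : Fin 0, rankVec (fun j => g (Y ω) (X j ω)) k = (p k : ℕ) + 1}.indicator
          (fun _ => (1 : ℝ)) ω))
        = {ω : Ω | h (Y ω) (fun k => X k ω) ∈ A}.indicator (fun _ => (1 : ℝ)) := by
      funext ω
      rw [hT0]
      simp
    rw [he]
    simp only [Nat.factorial_zero, Nat.cast_one, inv_one, one_mul]
    exact Filter.EventuallyEq.refl _ _
  -- main case N > 0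
  have k₀ : Fin N := ⟨0, hN⟩
  -- notation
  set Xv : Ω → (Fin N → 𝓧) := fun ω k => X k ω with hXvdef
  have hXv : Measurable Xv := measurable_pi_lambda _ fun k => hX k
  set Z : Ω → ℰ × (Fin N → 𝓧) := fun ω => (Y ω, Xv ω) with hZdef
  have hZ : Measurable Z := hY.prodMk hXv
  set ν : Measure ℰ := P.map Y with hνdef
  set μ : Measure 𝓧 := P.map (X k₀) with hμdef
  set π : Measure (Fin N → 𝓧) := Measure.pi (fun _ : Fin N => μ) with hπdef
  haveI : IsProbabilityMeasure ν := Measure.isProbabilityMeasure_map hY.aemeasurable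
  haveI : IsProbabilityMeasure μ := Measure.isProbabilityMeasure_map (hX k₀).aemeasurable
  haveI : IsProbabilityMeasure π := by rw [hπdef]; infer_instance
  set MM : Option (Fin N) → MeasurableSpace Ω := fun i : Option (Fin N) =>
      i.elim (MeasurableSpace.comap Y inferInstance)
        fun k => MeasurableSpace.comap (X k) inferInstance with hMMdef
  -- law of the X-vector
  have hπlaw : P.map Xv = π := by
    refine (Measure.pi_eq fun s hs => ?_).symm
    rw [Measure.map_apply hXv (MeasurableSet.univ_pi hs)]
    have hpre : Xv ⁻¹' Set.univ.pi s
        = ⋂ i : Option (Fin N), (i.elim Set.univ fun k => X k ⁻¹' s k) := by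
      ext ω
      simp [Set.mem_iInter, Option.forall, hXvdef]
    rw [hpre, hIndep.meas_iInter (fun i => ?_)]
    swap
    · rcases i with _ | k
      · exact MeasurableSet.univ
      · exact ⟨s k, hs k, rfl⟩
    rw [Fintype.prod_option]
    simp only [Option.elim]
    rw [measure_univ, one_mul]
    refine Finset.prod_congr rfl fun k _ => ?_
    rw [← Measure.map_apply (hX k) (hs k), (hId k k₀).map_eq]
  -- independence of Y and the X-vector
  have h_le : ∀ i : Option (Fin N), MM i ≤ (inferInstance : MeasurableSpace Ω) := by
    rintro (_ | k)
    · exact hY.comap_le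
    · exact (hX k).comap_le
  have hindepYX : ∀ s t, MeasurableSet s → MeasurableSet t →
      P (Y ⁻¹' s ∩ Xv ⁻¹' t) = P (Y ⁻¹' s) * P (Xv ⁻¹' t) := by
    have hInd := indep_biSup_compl h_le hIndep {none}
    intro s t hs ht
    refine (Indep_iff _ _ _).1 hInd _ _ ?_ ?_
    · have hle1 : MM none ≤ ⨆ i ∈ ({none} : Set (Option (Fin N))), MM i :=
        le_biSup MM (Set.mem_singleton none)
      exact hle1 _ ⟨s, hs, rfl⟩
    · have hle2 : (MeasurableSpace.comap Xv inferInstance) ≤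
          ⨆ i ∈ ({none} : Set (Option (Fin N)))ᶜ, MM i := by
        have e1 : (MeasurableSpace.comap Xv (inferInstance : MeasurableSpace (Fin N → 𝓧)))
            = ⨆ k : Fin N, MeasurableSpace.comap (X k) inferInstance := by
          show MeasurableSpace.comap Xv MeasurableSpace.pi = _
          rw [MeasurableSpace.pi, MeasurableSpace.comap_iSup]
          refine iSup_congr fun k => ?_
          rw [MeasurableSpace.comap_comp]
          rfl
        rw [e1]
        refine iSup_le fun k => ?_
        exact le_biSup MM (i := some k) (Set.mem_compl_singleton_iff.mpr (by simp))
      exact hle2 _ ⟨t, ht, rfl⟩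
  -- joint law
  have hZlaw : P.map Z = ν.prod π := by
    refine (Measure.prod_eq fun s t hs ht => ?_).symm
    rw [Measure.map_apply hZ (hs.prod ht)]
    have hZpre : Z ⁻¹' (s ×ˢ t) = Y ⁻¹' s ∩ Xv ⁻¹' t := Set.mk_preimage_prod Y Xv
    rw [hZpre, hindepYX s t hs ht, hνdef, ← hπlaw,
      Measure.map_apply hY hs, Measure.map_apply hXv ht]
  -- the sets of interest
  set S : Set (ℰ × (Fin N → 𝓧)) := {z | h z.1 z.2 ∈ A} with hSdef
  have hS : MeasurableSet S := hh hA
  set T : Equiv.Perm (Fin N) → Set (ℰ × (Fin N → 𝓧)) :=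
    fun q => {z | ∀ k, rankVec (fun j => g z.1 (z.2 j)) k = (q k : ℕ) + 1} with hTdef
  have hgz : Measurable fun z : ℰ × (Fin N → 𝓧) => fun j => g z.1 (z.2 j) :=
    measurable_pi_lambda _ fun j =>
      hg.comp (measurable_fst.prodMk ((measurable_pi_apply j).comp measurable_snd))
  have hT : ∀ q, MeasurableSet (T q) := by
    intro q
    have e : T q = (fun z : ℰ × (Fin N → 𝓧) => rankVec fun j => g z.1 (z.2 j)) ⁻¹'
        (⋂ k, (fun v : Fin N → ℕ => v k) ⁻¹' {(q k : ℕ) + 1}) := by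
      ext z
      simp [hTdef, Set.mem_iInter]
    rw [e]
    exact (measurable_rankVec.comp hgz)
      (MeasurableSet.iInter fun k => (measurable_pi_apply k) (measurableSet_singleton _))
  set ΦA : (ℰ × (Fin N → 𝓧)) → ℝ := S.indicator (fun _ => (1 : ℝ)) with hΦAdef
  set Φ : Equiv.Perm (Fin N) → (ℰ × (Fin N → 𝓧)) → ℝ :=
    fun q z => ΦA z * (T q).indicator (fun _ => (1 : ℝ)) z with hΦdef
  have hΦA : Measurable ΦA := measurable_const.indicator hS
  have hΦ : ∀ q, Measurable (Φ q) := fun q =>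
    hΦA.mul (measurable_const.indicator (hT q))
  have hΦeq : ∀ q, Φ q = (S ∩ T q).indicator (fun _ => (1 : ℝ)) := by
    intro q
    funext z
    by_cases h1 : z ∈ S <;> by_cases h2 : z ∈ T q <;>
      simp [hΦdef, hΦAdef, Set.indicator_apply, h1, h2, Set.mem_inter_iff]
  -- permutation invariance of π
  have hπperm : ∀ σ : Equiv.Perm (Fin N),
      Measure.map (fun x : Fin N → 𝓧 => fun k => x (σ k)) π = π := fun σ => pi_map_perm μ σ
  -- transformation of Φ under permutations
  have hperm : ∀ (q σ : Equiv.Perm (Fin N)) (y : ℰ) (x : Fin N → 𝓧),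
      Φ q (y, fun k => x (σ k)) = Φ (q * σ⁻¹) (y, x) := by
    intro q σ y x
    have hS' : ((y, fun k => x (σ k)) : ℰ × (Fin N → 𝓧)) ∈ S ↔ (y, x) ∈ S := by
      show (h y (fun k => x (σ k)) ∈ A) ↔ (h y x ∈ A)
      rw [hsymm y x σ]
    have hT' : ((y, fun k => x (σ k)) : ℰ × (Fin N → 𝓧)) ∈ T q ↔ (y, x) ∈ T (q * σ⁻¹) := by
      show (∀ k, rankVec (fun j => g y (x (σ j))) k = (q k : ℕ) + 1)
        ↔ (∀ k, rankVec (fun j => g y (x j)) k = ((q * σ⁻¹) k : ℕ) + 1)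
      constructor
      · intro hk k
        have h2 := hk (σ.symm k)
        rw [rankVec_comp_perm (fun j => g y (x j)) σ (σ.symm k)] at h2
        simpa [Equiv.Perm.mul_apply, Equiv.Perm.inv_def] using h2
      · intro hk k
        rw [rankVec_comp_perm (fun j => g y (x j)) σ k]
        have h2 := hk (σ k)
        simpa [Equiv.Perm.mul_apply, Equiv.Perm.inv_def] using h2
    simp only [hΦdef, hΦAdef]
    rw [Set.indicator_apply, Set.indicator_apply, Set.indicator_apply, Set.indicator_apply,
      if_congr hS' rfl rfl, if_congr hT' rfl rfl]
  -- integrability of sections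
  have hΦint : ∀ (q : Equiv.Perm (Fin N)) (y : ℰ), Integrable (fun x => Φ q (y, x)) π := by
    intro q y
    have e : (fun x => Φ q (y, x))
        = Set.indicator {x : Fin N → 𝓧 | (y, x) ∈ S ∩ T q} (fun _ => (1 : ℝ)) := by
      funext x
      rw [hΦeq q]
      by_cases hz : (y, x) ∈ S ∩ T q
      · rw [Set.indicator_of_mem hz, Set.indicator_of_mem (by exact hz)]
      · rw [Set.indicator_of_notMem hz, Set.indicator_of_notMem (by exact hz)]
    rw [e]
    exact (integrable_const (1 : ℝ)).indicator
      ((hS.inter (hT q)).preimage (measurable_const.prodMk measurable_id))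
  -- inner-integral invariance under relabeling of the permutation
  have hIinv : ∀ (y : ℰ) (q q' : Equiv.Perm (Fin N)),
      ∫ x, Φ q (y, x) ∂π = ∫ x, Φ q' (y, x) ∂π := by
    intro y q q'
    set σ : Equiv.Perm (Fin N) := q'⁻¹ * q with hσdef
    have hmeasσ : Measurable fun x : Fin N → 𝓧 => fun k => x (σ k) :=
      measurable_pi_lambda _ fun k => measurable_pi_apply _
    have step1 : ∫ x, Φ q (y, x) ∂π = ∫ x, Φ q (y, fun k => x (σ k)) ∂π := by
      conv_lhs => rw [← hπperm σ]
      exact integral_map hmeasσ.aemeasurable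
        ((hΦ q).comp (measurable_const.prodMk measurable_id)).aestronglyMeasurable
    rw [step1]
    have step2 : ∀ x : Fin N → 𝓧, Φ q (y, fun k => x (σ k)) = Φ q' (y, x) := by
      intro x
      rw [hperm q σ y x]
      congr 1
      rw [hσdef]
      group
    simp_rw [step2]
  -- sum over all permutations
  have hsum : ∀ z : ℰ × (Fin N → 𝓧), Function.Injective (fun k => g z.1 (z.2 k)) →
      ∑ q : Equiv.Perm (Fin N), Φ q z = ΦA z := by
    intro z hz
    obtain ⟨q0, hq0, huniq⟩ := rank_existsUnique hz
    have hsum1 : ∑ q : Equiv.Perm (Fin N), (T q).indicator (fun _ => (1 : ℝ)) z = 1 := by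
      rw [Finset.sum_eq_single q0]
      · exact Set.indicator_of_mem (show z ∈ T q0 from hq0) _
      · intro q _ hq
        refine Set.indicator_of_notMem ?_ _
        intro hmem
        exact hq (huniq q hmem)
      · intro hq0'
        exact absurd (Finset.mem_univ q0) hq0'
    calc ∑ q : Equiv.Perm (Fin N), Φ q z
        = ΦA z * ∑ q : Equiv.Perm (Fin N), (T q).indicator (fun _ => (1 : ℝ)) z := by
          rw [Finset.mul_sum]
      _ = ΦA z := by rw [hsum1, mul_one]
  -- core identity for good y
  have hcore : ∀ y : ℰ, (∀ᵐ x ∂π, Function.Injective fun k => g y (x k)) →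
      ∫ x, Φ p (y, x) ∂π = (N.factorial : ℝ)⁻¹ * ∫ x, ΦA (y, x) ∂π := by
    intro y hy
    have hsumI : ∑ q : Equiv.Perm (Fin N), ∫ x, Φ q (y, x) ∂π = ∫ x, ΦA (y, x) ∂π := by
      rw [← integral_finset_sum _ fun q _ => hΦint q y]
      refine integral_congr_ae ?_
      filter_upwards [hy] with x hx
      exact hsum (y, x) hx
    rw [Finset.sum_congr rfl fun q _ => hIinv y q p] at hsumI
    rw [Finset.sum_const, Finset.card_univ, Fintype.card_perm, Fintype.card_fin,
      nsmul_eq_mul] at hsumI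
    have hNf : (N.factorial : ℝ) ≠ 0 := Nat.cast_ne_zero.2 (Nat.factorial_ne_zero N)
    rw [← hsumI, inv_mul_cancel_left₀ hNf]
  -- a.e. injectivity in the product picture
  have hae : ∀ᵐ y ∂ν, ∀ᵐ x ∂π, Function.Injective fun k => g y (x k) := by
    have hD : MeasurableSet {z : ℰ × (Fin N → 𝓧) | Function.Injective fun k => g z.1 (z.2 k)} := by
      have e : {z : ℰ × (Fin N → 𝓧) | Function.Injective fun k => g z.1 (z.2 k)}
          = ⋂ (k : Fin N) (k' : Fin N),
              {z : ℰ × (Fin N → 𝓧) | g z.1 (z.2 k) = g z.1 (z.2 k') → k = k'} := by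
        ext z
        simp [Function.Injective, Set.mem_iInter]
      rw [e]
      refine MeasurableSet.iInter fun k => MeasurableSet.iInter fun k' => ?_
      by_cases hkk : k = k'
      · subst hkk
        have : {z : ℰ × (Fin N → 𝓧) | g z.1 (z.2 k) = g z.1 (z.2 k) → k = k} = Set.univ :=
          Set.eq_univ_of_forall fun z _ => rfl
        rw [this]; exact MeasurableSet.univ
      · have : {z : ℰ × (Fin N → 𝓧) | g z.1 (z.2 k) = g z.1 (z.2 k') → k = k'}
            = {z : ℰ × (Fin N → 𝓧) | g z.1 (z.2 k) = g z.1 (z.2 k')}ᶜ := by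
          ext z
          simp [hkk]
        rw [this]
        refine (measurableSet_eq_fun ?_ ?_).compl
        · exact hg.comp (measurable_fst.prodMk ((measurable_pi_apply k).comp measurable_snd))
        · exact hg.comp (measurable_fst.prodMk ((measurable_pi_apply k').comp measurable_snd))
    have h1 : ∀ᵐ z ∂(P.map Z), Function.Injective fun k => g z.1 (z.2 k) := by
      rw [ae_map_iff hZ.aemeasurable hD]
      exact hdist
    rw [hZlaw] at h1
    exact Measure.ae_ae_of_ae_prod h1
    -- integrability on the product space
  have hint1 : Integrable (Φ p) (ν.prod π) := by
    rw [hΦeq p]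
    exact (integrable_const (1 : ℝ)).indicator (hS.inter (hT p))
  have hint2 : Integrable ΦA (ν.prod π) := by
    rw [hΦAdef]
    exact (integrable_const (1 : ℝ)).indicator hS
  -- transfer of set integrals to the product picture
  have transfer : ∀ (φ : (ℰ × (Fin N → 𝓧)) → ℝ), Measurable φ → Integrable φ (ν.prod π) →
      ∀ B : Set ℰ, MeasurableSet B →
      ∫ ω in Y ⁻¹' B, φ (Z ω) ∂P = ∫ y in B, ∫ x, φ (y, x) ∂π ∂ν := by
    intro φ hφ hφint B hB
    have hpre : Z ⁻¹' (B ×ˢ (Set.univ : Set (Fin N → 𝓧))) = Y ⁻¹' B := by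
      ext ω
      simp [hZdef]
    have h1 : ∫ z in B ×ˢ (Set.univ : Set (Fin N → 𝓧)), φ z ∂(P.map Z)
        = ∫ ω in Y ⁻¹' B, φ (Z ω) ∂P := by
      rw [setIntegral_map (hB.prod MeasurableSet.univ) hφ.aestronglyMeasurable hZ.aemeasurable,
        hpre]
    rw [← h1, hZlaw, setIntegral_prod φ hφint.integrableOn]
    simp [Measure.restrict_univ]
  -- key set-integral identity
  have hkey : ∀ B : Set ℰ, MeasurableSet B →
      ∫ ω in Y ⁻¹' B, Φ p (Z ω) ∂P
        = (N.factorial : ℝ)⁻¹ * ∫ ω in Y ⁻¹' B, ΦA (Z ω) ∂P := by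
    intro B hB
    rw [transfer (Φ p) (hΦ p) hint1 B hB, transfer ΦA hΦA hint2 B hB, ← integral_const_mul]
    refine setIntegral_congr_ae hB ?_
    filter_upwards [hae] with y hy _
    exact hcore y hy
  -- conditional expectation argument
  have hmY : MeasurableSpace.comap Y inferInstance ≤ (inferInstance : MeasurableSpace Ω) :=
    hY.comap_le
  haveI : SigmaFinite (P.trim hmY) := by infer_instance
  have eFG : (fun ω =>
      ({ω | h (Y ω) (fun k => X k ω) ∈ A}.indicator (fun _ => (1 : ℝ)) ω) *
      ({ω | ∀ k, rankVec (fun j => g (Y ω) (X j ω)) k = (p k : ℕ) + 1}.indicator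
        (fun _ => (1 : ℝ)) ω)) = fun ω => Φ p (Z ω) := rfl
  have eFA : ({ω : Ω | h (Y ω) (fun k => X k ω) ∈ A}.indicator (fun _ => (1 : ℝ)))
      = fun ω => ΦA (Z ω) := rfl
  rw [eFG, eFA]
  have hFGint : Integrable (fun ω => Φ p (Z ω)) P := by
    have e : (fun ω => Φ p (Z ω)) = Set.indicator (Z ⁻¹' (S ∩ T p)) (fun _ => (1 : ℝ)) := by
      funext ω
      rw [hΦeq p]
      by_cases hz : Z ω ∈ S ∩ T p
      · rw [Set.indicator_of_mem hz, Set.indicator_of_mem (by exact hz)]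
      · rw [Set.indicator_of_notMem hz, Set.indicator_of_notMem (by exact hz)]
    rw [e]
    exact (integrable_const (1 : ℝ)).indicator (hZ (hS.inter (hT p)))
  have hFAint : Integrable (fun ω => ΦA (Z ω)) P := by
    have e : (fun ω => ΦA (Z ω)) = Set.indicator (Z ⁻¹' S) (fun _ => (1 : ℝ)) := by
      funext ω
      rw [hΦAdef]
      by_cases hz : Z ω ∈ S
      · rw [Set.indicator_of_mem hz, Set.indicator_of_mem (by exact hz)]
      · rw [Set.indicator_of_notMem hz, Set.indicator_of_notMem (by exact hz)]
    rw [e]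
    exact (integrable_const (1 : ℝ)).indicator (hZ hS)
  have h1 : P[fun ω => Φ p (Z ω)|MeasurableSpace.comap Y inferInstance]
      =ᵐ[P] P[(N.factorial : ℝ)⁻¹ • fun ω => ΦA (Z ω)|MeasurableSpace.comap Y inferInstance] := by
    refine ae_eq_condExp_of_forall_setIntegral_eq hmY (hFAint.smul _)
      (fun s _ _ => integrable_condExp.integrableOn) (fun s hs _ => ?_)
      (StronglyMeasurable.aestronglyMeasurable stronglyMeasurable_condExp)
    rcases hs with ⟨B, hB, rfl⟩
    rw [setIntegral_condExp hmY hFGint ⟨B, hB, rfl⟩, hkey B hB]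
    simp_rw [Pi.smul_apply, smul_eq_mul]
    rw [integral_const_mul]
  refine h1.trans ?_
  refine (condExp_smul ((N.factorial : ℝ)⁻¹) (fun ω => ΦA (Z ω)) _).trans ?_
  exact Filter.Eventually.of_forall fun ω => rfl
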